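/- arXiv:2403.17087 — 7 statements merged into one kernel-verified Lean document; each statement's English description precedes it below -/
import Mathlib

section
/- (Sparsity lemma.) Let X be an n×d real matrix, β⁰ ∈ ℝ^d with support S₀ = {j : β⁰_j ≠ 0} of cardinality s₀, ω ∈ ℝⁿ, y = Xβ⁰ + ω, ε > 0, and λ ≥ λ₀ where λ₀ ≥ max_j |(2/n)·ωᵀX^j|. Suppose β̂ ∈ ℝ^d satisfies the inequality (2/n)‖X(β̂ − β⁰)‖₂² + (λ/(nε))‖β̂‖₁ ≤ λ‖β̂ − β⁰‖₁ + (λ/(nε))‖β⁰‖₁. Then (2/n)‖X(β̂ − β⁰)‖₂² + λ(1/(nε) − 1)‖β̂_{S₀ᶜ}‖₁ ≤ λ(1/(nε) + 1)‖β̂_{S₀} − β⁰_{S₀}‖₁, and moreover ‖β⁰_{S₀} − β̂_{S₀}‖₁ ≤ √s₀ · ‖β⁰_{S₀} − β̂_{S₀}‖₂. -/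
open Finset

/-- **Sparsity lemma.** In the fixed-design model `y = Xβ⁰ + ω` with support
`S₀ = {j : β⁰_j ≠ 0}` of cardinality `s₀`, if `λ ≥ λ₀ ≥ max_j |(2/n) ωᵀX^j|` and
`β̂` satisfies `(2/n)‖X(β̂ − β⁰)‖₂² + (λ/(nε))‖β̂‖₁ ≤ λ‖β̂ − β⁰‖₁ + (λ/(nε))‖β⁰‖₁`,
then `(2/n)‖X(β̂ − β⁰)‖₂² + λ(1/(nε) − 1)‖β̂_{S₀ᶜ}‖₁ ≤ λ(1/(nε) + 1)‖β̂_{S₀} − β⁰_{S₀}‖₁`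
and `‖β⁰_{S₀} − β̂_{S₀}‖₁ ≤ √s₀ ‖β⁰_{S₀} − β̂_{S₀}‖₂`. -/
theorem sic_sparsity_lemma (n d : ℕ) (hn : 0 < n)
    (X : Matrix (Fin n) (Fin d) ℝ) (β0 βh : Fin d → ℝ) (ω : Fin n → ℝ)
    (lam lam0 ε : ℝ) (hε : 0 < ε)
    (y : Fin n → ℝ) (hy : y = X.mulVec β0 + ω)
    (hlam0 : ∀ j : Fin d, |(2 / (n : ℝ)) * ∑ i, ω i * X i j| ≤ lam0)
    (hlam : lam0 ≤ lam)
    (S0 : Finset (Fin d)) (hS0 : S0 = univ.filter (fun j => β0 j ≠ 0))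
    (s0 : ℕ) (hs0 : s0 = S0.card)
    (hineq : (2 / (n : ℝ)) * ∑ i, (X.mulVec (βh - β0) i) ^ 2
              + (lam / (n * ε)) * ∑ j, |βh j|
            ≤ lam * ∑ j, |βh j - β0 j| + (lam / (n * ε)) * ∑ j, |β0 j|) :
    ((2 / (n : ℝ)) * ∑ i, (X.mulVec (βh - β0) i) ^ 2
        + lam * (1 / (n * ε) - 1) * ∑ j ∈ S0ᶜ, |βh j|
      ≤ lam * (1 / (n * ε) + 1) * ∑ j ∈ S0, |βh j - β0 j|)
    ∧ (∑ j ∈ S0, |β0 j - βh j|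
        ≤ Real.sqrt s0 * Real.sqrt (∑ j ∈ S0, (β0 j - βh j) ^ 2)) := by
  have hcompl : ∀ j ∈ S0ᶜ, β0 j = 0 := by
    intro j hj
    rw [hS0] at hj
    simpa using hj
  constructor
  · -- part 1
    by_cases hd : d = 0
    · subst hd
      have hS0e : S0 = ∅ := Finset.eq_empty_of_isEmpty S0
      simp [hS0e, Matrix.mulVec, dotProduct]
    · have hlamnn : 0 ≤ lam :=
        le_trans (abs_nonneg _) (le_trans (hlam0 ⟨0, Nat.pos_of_ne_zero hd⟩) hlam)
      have hne : (0:ℝ) < (n:ℝ) * ε := by positivity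
      have hfac : 0 ≤ lam / ((n:ℝ) * ε) := div_nonneg hlamnn hne.le
      set Q := ∑ i, (X.mulVec (βh - β0) i) ^ 2 with hQ
      have h1 : ∑ j, |βh j| = ∑ j ∈ S0, |βh j| + ∑ j ∈ S0ᶜ, |βh j| :=
        (Finset.sum_add_sum_compl S0 _).symm
      have h2 : ∑ j, |β0 j| = ∑ j ∈ S0, |β0 j| := by
        rw [← Finset.sum_add_sum_compl S0 (fun j => |β0 j|),
          Finset.sum_eq_zero (s := S0ᶜ) (fun j hj => by rw [hcompl j hj, abs_zero]), add_zero]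
      have h3 : ∑ j, |βh j - β0 j| = ∑ j ∈ S0, |βh j - β0 j| + ∑ j ∈ S0ᶜ, |βh j| := by
        rw [← Finset.sum_add_sum_compl S0 (fun j => |βh j - β0 j|)]
        congr 1
        exact Finset.sum_congr rfl (fun j hj => by rw [hcompl j hj, sub_zero])
      have htri : ∑ j ∈ S0, |β0 j| ≤ ∑ j ∈ S0, |βh j| + ∑ j ∈ S0, |βh j - β0 j| := by
        rw [← Finset.sum_add_distrib]
        exact Finset.sum_le_sum fun j _ => by
          calc |β0 j| = |βh j - (βh j - β0 j)| := by ring_nf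
          _ ≤ |βh j| + |βh j - β0 j| := abs_sub _ _
      rw [h1, h2, h3] at hineq
      have key : lam / ((n:ℝ)*ε) * (∑ j ∈ S0, |β0 j| - ∑ j ∈ S0, |βh j|)
          ≤ lam / ((n:ℝ)*ε) * ∑ j ∈ S0, |βh j - β0 j| :=
        mul_le_mul_of_nonneg_left (by linarith) hfac
      rw [mul_add] at hineq
      rw [mul_sub] at key
      rw [show lam * (1 / ((n:ℝ)*ε) - 1) = lam/((n:ℝ)*ε) - lam from by ring,
        show lam * (1 / ((n:ℝ)*ε) + 1) = lam/((n:ℝ)*ε) + lam from by ring,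
        sub_mul, add_mul]
      rw [mul_add] at hineq
      linarith [hineq, key]
  · -- part 2
    have := sq_sum_le_card_mul_sum_sq (s := S0) (f := fun j => |β0 j - βh j|)
    have h2 : (∑ j ∈ S0, |β0 j - βh j|) ^ 2 ≤ (s0 : ℝ) * ∑ j ∈ S0, (β0 j - βh j) ^ 2 := by
      rw [hs0]
      simpa [sq_abs] using this
    have hnn : 0 ≤ ∑ j ∈ S0, |β0 j - βh j| := Finset.sum_nonneg fun j _ => abs_nonneg _
    calc ∑ j ∈ S0, |β0 j - βh j|
        = Real.sqrt ((∑ j ∈ S0, |β0 j - βh j|) ^ 2) := (Real.sqrt_sq hnn).symm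
      _ ≤ Real.sqrt ((s0:ℝ) * ∑ j ∈ S0, (β0 j - βh j) ^ 2) := Real.sqrt_le_sqrt h2
      _ = Real.sqrt s0 * Real.sqrt (∑ j ∈ S0, (β0 j - βh j) ^ 2) := Real.sqrt_mul (by positivity) _
end

section
/- (q-vague convergence of the SIC prior to a Dirac measure as λ → ∞.) Fix σ > 0 and ε > 0, and let (λ_n) be a sequence of positive reals with λ_n → +∞. For each n let π_n be the measure on ℝ with Lebesgue density β ↦ exp(−(λ_n/(2σ²))·β²/(β² + ε²)). Then there exist positive reals a_n (one may take a_n = 1) such that for every continuous real-valued function f on ℝ with compact support, a_n·∫_ℝ f(β)·exp(−(λ_n/(2σ²))·β²/(β² + ε²)) dβ → f(0) as n → ∞; that is, π_n converges q-vaguely to the Dirac measure at 0. -/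
open Filter MeasureTheory

/-!
Normalised over a compact neighbourhood `K` of `x₀`, the densities `exp (-t p)` form a family of
peak functions at the unique zero `x₀` of `p` as `t → ∞`: their mass on `K` is one, and outside a
neighbourhood `u` of `x₀`, where `p ≥ m > 0`, they are at most `exp (-t m)` divided by the lower
bound `c exp (-t m / 2)` of the normaliser that comes from the part of `K` where `p < m / 2`.
Mathlib's peak-function theorem then gives convergence against every integrable `g` continuous
at `x₀`. The SIC prior is of this form with `p β = β² / (β² + ε²)` and `t = λ / (2σ²)`, and `a_n`
is the inverse of its normaliser over `[-1, 1]`.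
-/

open Set Topology Real

section PeakExp

variable {α E ι : Type*} [TopologicalSpace α] [T2Space α] [MeasurableSpace α] [BorelSpace α]
  {μ : Measure α} [IsFiniteMeasureOnCompacts μ]
  {K : Set α} {x₀ : α} {p : α → ℝ}

lemma integrableOn_exp_neg_mul (hK : IsCompact K) (hp : Continuous p) (s : ℝ) :
    IntegrableOn (fun x => exp (-s * p x)) K μ :=
  (by fun_prop : Continuous fun x => exp (-s * p x)).continuousOn.integrableOn_compact hK

lemma setIntegral_exp_neg_mul_pos [μ.IsOpenPosMeasure] (hK : IsCompact K) (hKx : K ∈ 𝓝 x₀)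
    (hp : Continuous p) (s : ℝ) : 0 < ∫ x in K, exp (-s * p x) ∂μ := by
  have : NeZero (μ.restrict K) :=
    ⟨by simpa [Measure.restrict_eq_zero] using (Measure.measure_pos_of_mem_nhds μ hKx).ne'⟩
  exact integral_exp_pos (integrableOn_exp_neg_mul hK hp s)

lemma exists_pos_mul_exp_le_setIntegral_exp_neg_mul [μ.IsOpenPosMeasure] (hK : IsCompact K)
    (hKx : K ∈ 𝓝 x₀) (hp : Continuous p) (hp0 : p x₀ = 0) {η : ℝ} (hη : 0 < η) :
    ∃ c > 0, ∀ s, 0 ≤ s → c * exp (-s * η) ≤ ∫ x in K, exp (-s * p x) ∂μ := by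
  set v := interior K ∩ p ⁻¹' Iio η
  have hv_open : IsOpen v := isOpen_interior.inter (isOpen_Iio.preimage hp)
  have hv_nhds : v ∈ 𝓝 x₀ :=
    hv_open.mem_nhds ⟨mem_interior_iff_mem_nhds.2 hKx, by simp [hp0, hη]⟩
  have hvK : v ⊆ K := inter_subset_left.trans interior_subset
  have hv_fin : μ v < ⊤ := (measure_mono hvK).trans_lt hK.measure_lt_top
  have hv_pos : 0 < μ.real v :=
    ENNReal.toReal_pos (Measure.measure_pos_of_mem_nhds μ hv_nhds).ne' hv_fin.ne
  refine ⟨μ.real v, hv_pos, fun s hs => ?_⟩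
  calc μ.real v * exp (-s * η) = ∫ _ in v, exp (-s * η) ∂μ := by simp [mul_comm]
    _ ≤ ∫ x in v, exp (-s * p x) ∂μ :=
      setIntegral_mono_on (integrableOn_const hv_fin.ne)
        ((integrableOn_exp_neg_mul hK hp s).mono_set hvK) hv_open.measurableSet
        fun x hx => exp_le_exp.2 (by nlinarith [show p x < η from hx.2])
    _ ≤ ∫ x in K, exp (-s * p x) ∂μ :=
      setIntegral_mono_set (integrableOn_exp_neg_mul hK hp s)
        (Eventually.of_forall fun x => (exp_pos _).le) hvK.eventuallyLE

lemma tendstoUniformlyOn_compl_inv_setIntegral_exp_neg_mul_mul [μ.IsOpenPosMeasure]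
    (hK : IsCompact K) (hKx : K ∈ 𝓝 x₀) (hp : Continuous p) (hp0 : p x₀ = 0) {t : ι → ℝ}
    {l : Filter ι} (ht : Tendsto t l atTop) {u : Set α} (hu : ∃ m > 0, ∀ x ∉ u, m ≤ p x) :
    TendstoUniformlyOn (fun i x => (∫ y in K, exp (-t i * p y) ∂μ)⁻¹ * exp (-t i * p x)) 0 l
      uᶜ := by
  obtain ⟨m, hm, hmu⟩ := hu
  obtain ⟨c, hc, hZ⟩ :=
    exists_pos_mul_exp_le_setIntegral_exp_neg_mul (μ := μ) hK hKx hp hp0 (half_pos hm)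
  have hbound : ∀ s, 0 ≤ s → ∀ x ∉ u,
      (∫ y in K, exp (-s * p y) ∂μ)⁻¹ * exp (-s * p x) ≤ c⁻¹ * exp (-s * (m / 2)) := by
    intro s hs x hx
    calc (∫ y in K, exp (-s * p y) ∂μ)⁻¹ * exp (-s * p x)
        ≤ (c * exp (-s * (m / 2)))⁻¹ * exp (-s * m) :=
          mul_le_mul (inv_anti₀ (by positivity) (hZ s hs))
            (exp_le_exp.2 (by nlinarith [hmu x hx])) (exp_pos _).le (by positivity)
      _ = c⁻¹ * exp (-s * (m / 2)) := by
          rw [mul_inv, ← exp_neg, mul_assoc, ← exp_add]; ring_nf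
  have hdecay : Tendsto (fun i => c⁻¹ * exp (-t i * (m / 2))) l (𝓝 0) := by
    simpa using (tendsto_exp_atBot.comp
      ((tendsto_neg_atTop_atBot.comp ht).atBot_mul_const (half_pos hm))).const_mul c⁻¹
  rw [Metric.tendstoUniformlyOn_iff]
  intro ε hε
  filter_upwards [ht.eventually_ge_atTop 0, hdecay.eventually_lt_const hε] with i hi hiε x hx
  rw [Pi.zero_apply, dist_zero_left, Real.norm_of_nonneg
    (mul_pos (inv_pos.2 (setIntegral_exp_neg_mul_pos hK hKx hp _)) (exp_pos _)).le]
  exact (hbound _ hi x hx).trans_lt hiε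

theorem tendsto_inv_setIntegral_exp_neg_mul_smul_integral [μ.IsOpenPosMeasure]
    [NormedAddCommGroup E] [NormedSpace ℝ E] [CompleteSpace E] (hK : IsCompact K)
    (hKx : K ∈ 𝓝 x₀) (hp : Continuous p) (hp0 : p x₀ = 0)
    (hsep : ∀ u ∈ 𝓝 x₀, ∃ m > 0, ∀ x ∉ u, m ≤ p x) {t : ι → ℝ} {l : Filter ι}
    (ht : Tendsto t l atTop) {g : α → E} (hg : Integrable g μ) (hgx : ContinuousAt g x₀) :
    Tendsto (fun i => (∫ x in K, exp (-t i * p x) ∂μ)⁻¹ • ∫ x, exp (-t i * p x) • g x ∂μ) l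
      (𝓝 (g x₀)) := by
  have hZ : ∀ i, 0 < ∫ x in K, exp (-t i * p x) ∂μ :=
    fun i => setIntegral_exp_neg_mul_pos hK hKx hp _
  have := tendsto_integral_peak_smul_of_integrable_of_tendsto (μ := μ) (l := l)
    (φ := fun i x => (∫ y in K, exp (-t i * p y) ∂μ)⁻¹ * exp (-t i * p x))
    hK.measurableSet hKx hK.measure_lt_top.ne
    (Eventually.of_forall fun i x => (mul_pos (inv_pos.2 (hZ i)) (exp_pos _)).le)
    (fun u hu hx₀ => tendstoUniformlyOn_compl_inv_setIntegral_exp_neg_mul_mul hK hKx hp hp0 ht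
      (hsep u (hu.mem_nhds hx₀)))
    (tendsto_const_nhds.congr fun i => by rw [integral_const_mul, inv_mul_cancel₀ (hZ i).ne'])
    (Eventually.of_forall fun i => by fun_prop) hg hgx
  simpa only [mul_smul, integral_smul] using this

end PeakExp

lemma exists_pos_le_sq_div_sq_add_sq_of_notMem {ε : ℝ} (hε : 0 < ε) {u : Set ℝ} (hu : u ∈ 𝓝 0) :
    ∃ m > 0, ∀ β ∉ u, m ≤ β ^ 2 / (β ^ 2 + ε ^ 2) := by
  obtain ⟨δ, hδ, hδu⟩ := Metric.mem_nhds_iff.1 hu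
  refine ⟨δ ^ 2 / (δ ^ 2 + ε ^ 2), by positivity, fun β hβ => ?_⟩
  have hδβ : δ ^ 2 ≤ β ^ 2 := by
    have : δ ≤ |β| := by simpa [Real.dist_eq] using fun h => hβ (hδu h)
    nlinarith [sq_abs β, abs_nonneg β]
  rw [div_le_div_iff₀ (by positivity) (by positivity)]
  nlinarith [sq_nonneg ε]

theorem sic_prior_qvague_dirac_general (σ ε : ℝ) (hσ : 0 < σ) (hε : 0 < ε)
    (lam : ℕ → ℝ) (hlam : Tendsto lam atTop atTop) :
    ∃ a : ℕ → ℝ, (∀ n, 0 < a n) ∧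
      ∀ f : ℝ → ℝ, Continuous f → HasCompactSupport f →
        Tendsto (fun n =>
            a n * ∫ β : ℝ, f β * Real.exp (-(lam n / (2 * σ ^ 2)) * (β ^ 2 / (β ^ 2 + ε ^ 2))))
          atTop (nhds (f 0)) := by
  have hp : Continuous fun β : ℝ => β ^ 2 / (β ^ 2 + ε ^ 2) :=
    by fun_prop (disch := intro β; positivity)
  have hK : Icc (-1 : ℝ) 1 ∈ 𝓝 0 := Icc_mem_nhds (by norm_num) (by norm_num)
  have ht : Tendsto (fun n => lam n / (2 * σ ^ 2)) atTop atTop :=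
    hlam.atTop_div_const (by positivity)
  refine ⟨fun n => (∫ β in Icc (-1) 1,
      exp (-(lam n / (2 * σ ^ 2)) * (β ^ 2 / (β ^ 2 + ε ^ 2))))⁻¹,
    fun n => inv_pos.2 (setIntegral_exp_neg_mul_pos isCompact_Icc hK hp _), fun f hf hfc => ?_⟩
  have := tendsto_inv_setIntegral_exp_neg_mul_smul_integral (μ := volume) isCompact_Icc hK hp
    (by simp) (fun u hu => exists_pos_le_sq_div_sq_add_sq_of_notMem hε hu) ht
    (hf.integrable_of_hasCompactSupport hfc) hf.continuousAt
  simpa only [smul_eq_mul, mul_comm (f _)] using this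

/-- **q-vague convergence of the SIC prior to a Dirac measure as λ → ∞.**
With `σ, ε > 0` fixed and `λ_n → ∞`, there are positive scalars `a_n` (one may
take `a_n = 1`) such that for every continuous compactly supported `f`,
`a_n ∫ f(β) exp(−(λ_n/(2σ²)) β²/(β² + ε²)) dβ → f(0)`. -/
theorem sic_prior_qvague_dirac (σ ε : ℝ) (hσ : 0 < σ) (hε : 0 < ε)
    (lam : ℕ → ℝ) (hlam_pos : ∀ n, 0 < lam n)
    (hlam : Tendsto lam atTop atTop) :
    ∃ a : ℕ → ℝ, (∀ n, 0 < a n) ∧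
      ∀ f : ℝ → ℝ, Continuous f → HasCompactSupport f →
        Tendsto (fun n =>
            a n * ∫ β : ℝ, f β * Real.exp (-(lam n / (2 * σ ^ 2)) * (β ^ 2 / (β ^ 2 + ε ^ 2))))
          atTop (nhds (f 0)) :=
  sic_prior_qvague_dirac_general σ ε hσ hε lam hlam
end

section
/- (q-vague convergence of the SIC prior to a flat prior as ε → 0.) Fix σ > 0 and λ > 0, and let (ε_n) be a sequence of positive reals with ε_n → 0. For each n let π_n be the measure on ℝ with Lebesgue density β ↦ exp(−(λ/(2σ²))·β²/(β² + ε_n²)). Then there exist positive reals a_n such that for every continuous real-valued function f on ℝ with compact support, a_n·∫_ℝ f(β)·exp(−(λ/(2σ²))·β²/(β² + ε_n²)) dβ → ∫_ℝ f(β) dβ as n → ∞; that is, π_n converges q-vaguely to Lebesgue measure (the flat prior). -/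
/-!
Taking the constant normalisation `a_n = exp (λ/(2σ²))`, the rescaled weight
`exp (λ/(2σ²) · ε_n² / (β² + ε_n²))` tends to `1` at every `β ≠ 0` and stays bounded,
so dominated convergence gives `a_n ∫ f π_n → ∫ f`.
-/

open Filter MeasureTheory Topology Set

theorem tendsto_integral_mul_of_bounded_of_tendsto_ae {α ι : Type*} [MeasurableSpace α]
    {μ : Measure α} {l : Filter ι} [l.IsCountablyGenerated] {f : α → ℝ} {g : ι → α → ℝ}
    {C L : ℝ} (hf : Integrable f μ) (hg_meas : ∀ i, AEStronglyMeasurable (g i) μ)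
    (hg_bound : ∀ i, ∀ᵐ x ∂μ, |g i x| ≤ C) (hg_lim : ∀ᵐ x ∂μ, Tendsto (g · x) l (𝓝 L)) :
    Tendsto (fun i => ∫ x, f x * g i x ∂μ) l (𝓝 ((∫ x, f x ∂μ) * L)) := by
  rw [← integral_mul_const]
  refine tendsto_integral_filter_of_dominated_convergence (fun x => |f x| * C)
    (.of_forall fun i => hf.aestronglyMeasurable.mul (hg_meas i))
    (.of_forall fun i => ?_) (hf.abs.mul_const C)
    (hg_lim.mono fun x hx => hx.const_mul (f x))
  filter_upwards [hg_bound i] with x hx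
  rw [Real.norm_eq_abs, abs_mul]
  exact mul_le_mul_of_nonneg_left hx (abs_nonneg _)

theorem sq_div_sq_add_sq_mem_Icc (x y : ℝ) : x ^ 2 / (x ^ 2 + y ^ 2) ∈ Icc (0 : ℝ) 1 :=
  ⟨by positivity, div_le_one_of_le₀ (le_add_of_nonneg_right (sq_nonneg y)) (by positivity)⟩

theorem tendsto_sq_div_sq_add_sq_one {ι : Type*} {l : Filter ι} {x : ℝ} (hx : x ≠ 0)
    {ε : ι → ℝ} (hε : Tendsto ε l (𝓝 0)) :
    Tendsto (fun i => x ^ 2 / (x ^ 2 + ε i ^ 2)) l (𝓝 1) := by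
  have hden : Tendsto (fun i => x ^ 2 + ε i ^ 2) l (𝓝 (x ^ 2)) := by
    simpa using (hε.pow 2).const_add (x ^ 2)
  have := (tendsto_const_nhds (x := x ^ 2)).div hden (pow_ne_zero 2 hx)
  rwa [div_self (pow_ne_zero 2 hx)] at this

theorem abs_exp_neg_mul_le_exp_abs (c : ℝ) {t : ℝ} (ht : t ∈ Icc (0 : ℝ) 1) :
    |Real.exp (-c * t)| ≤ Real.exp |c| := by
  rw [abs_of_pos (Real.exp_pos _), Real.exp_le_exp]
  nlinarith [neg_abs_le c, abs_nonneg c, ht.1, ht.2]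

theorem sic_prior_qvague_flat_general (σ lam : ℝ) (ε : ℕ → ℝ)
    (hε : Tendsto ε atTop (nhds 0)) :
    ∃ a : ℕ → ℝ, (∀ n, 0 < a n) ∧
      ∀ f : ℝ → ℝ, Continuous f → HasCompactSupport f →
        Tendsto (fun n =>
            a n * ∫ β : ℝ, f β * Real.exp (-(lam / (2 * σ ^ 2)) * (β ^ 2 / (β ^ 2 + (ε n) ^ 2))))
          atTop (nhds (∫ β : ℝ, f β)) := by
  set c := lam / (2 * σ ^ 2)
  refine ⟨fun _ => Real.exp c, fun _ => Real.exp_pos c, fun f hf hsupp => ?_⟩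
  have hlim := tendsto_integral_mul_of_bounded_of_tendsto_ae
    (g := fun n β => Real.exp (-c * (β ^ 2 / (β ^ 2 + ε n ^ 2)))) (L := Real.exp (-c))
    (hf.integrable_of_hasCompactSupport hsupp)
    (fun n => (by fun_prop : Measurable _).aestronglyMeasurable)
    (fun n => .of_forall fun β => abs_exp_neg_mul_le_exp_abs c (sq_div_sq_add_sq_mem_Icc β (ε n)))
    ((volume.ae_ne 0).mono fun β hβ =>
      ((tendsto_sq_div_sq_add_sq_one hβ hε).const_mul (-c)).rexp.trans (by simp))
  convert hlim.const_mul (Real.exp c) using 2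
  rw [mul_left_comm, ← Real.exp_add, add_neg_cancel, Real.exp_zero, mul_one]

/-- **q-vague convergence of the SIC prior to a flat prior as ε → 0.**
With `σ, λ > 0` fixed and `ε_n → 0` (each `ε_n > 0`), there are positive scalars
`a_n` such that for every continuous compactly supported `f`,
`a_n ∫ f(β) exp(−(λ/(2σ²)) β²/(β² + ε_n²)) dβ → ∫ f(β) dβ`. -/
theorem sic_prior_qvague_flat (σ lam : ℝ) (hσ : 0 < σ) (hlam : 0 < lam)
    (ε : ℕ → ℝ) (hε_pos : ∀ n, 0 < ε n)
    (hε : Tendsto ε atTop (nhds 0)) :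
    ∃ a : ℕ → ℝ, (∀ n, 0 < a n) ∧
      ∀ f : ℝ → ℝ, Continuous f → HasCompactSupport f →
        Tendsto (fun n =>
            a n * ∫ β : ℝ, f β * Real.exp (-(lam / (2 * σ ^ 2)) * (β ^ 2 / (β ^ 2 + (ε n) ^ 2))))
          atTop (nhds (∫ β : ℝ, f β)) :=
  sic_prior_qvague_flat_general σ lam ε hε
end

section
/- (Properness of the non-flat component of the SIC prior.) For all λ > 0, σ > 0 and ε > 0, the function β ↦ exp{(λ/(2σ²))·ε²/(β² + ε²)} − 1 is nonnegative and Lebesgue-integrable over ℝ; equivalently, ∫_ℝ (exp{(λ/(2σ²))·ε²/(β² + ε²)} − 1) dβ < ∞, so that the normalizing constant c(λ, ε) = (∫_ℝ (exp{(λ/(2σ²))·ε²/(β² + ε²)} − 1) dβ)^{−1} is well defined and positive. -/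
open MeasureTheory

lemma exp_sub_one_le_mul_exp (x : ℝ) : Real.exp x - 1 ≤ x * Real.exp x := by
  have h := Real.add_one_le_exp (-x)
  have hx : Real.exp (-x) = (Real.exp x)⁻¹ := Real.exp_neg x
  have hpos : 0 < Real.exp x := Real.exp_pos x
  rw [hx] at h
  have := mul_le_mul_of_nonneg_left h (le_of_lt hpos)
  rw [mul_inv_cancel₀ (ne_of_gt hpos)] at this
  nlinarith

lemma integrable_sq_add_sq_inv (ε : ℝ) (hε : 0 < ε) :
    Integrable (fun β : ℝ => (β ^ 2 + ε ^ 2)⁻¹) := by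
  have h : Integrable (fun x : ℝ => (1 + x ^ 2)⁻¹) := integrable_inv_one_add_sq
  have h2 := ((h.comp_div (ne_of_gt hε))).const_mul (ε ^ 2)⁻¹
  refine h2.congr ?_
  filter_upwards with β
  have hε2 : (ε:ℝ) ^ 2 ≠ 0 := by positivity
  field_simp
  ring

/-- **Properness of the non-flat component of the SIC prior.** For all
`λ, σ, ε > 0`, the function `β ↦ exp((λ/(2σ²)) ε²/(β² + ε²)) − 1` is nonnegative
and Lebesgue-integrable over `ℝ`, so its normalizing constant is well defined
and positive. -/
theorem sic_proper_component_integrable (lam σ ε : ℝ)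
    (hlam : 0 < lam) (hσ : 0 < σ) (hε : 0 < ε) :
    (∀ β : ℝ, 0 ≤ Real.exp (lam / (2 * σ ^ 2) * (ε ^ 2 / (β ^ 2 + ε ^ 2))) - 1) ∧
      Integrable (fun β : ℝ =>
        Real.exp (lam / (2 * σ ^ 2) * (ε ^ 2 / (β ^ 2 + ε ^ 2))) - 1) := by
  set c := lam / (2 * σ ^ 2) with hc
  have hcpos : 0 < c := by positivity
  have harg : ∀ β : ℝ, 0 ≤ c * (ε ^ 2 / (β ^ 2 + ε ^ 2)) := by
    intro β; positivity
  have hargle : ∀ β : ℝ, c * (ε ^ 2 / (β ^ 2 + ε ^ 2)) ≤ c := by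
    intro β
    have hden : 0 < β ^ 2 + ε ^ 2 := by positivity
    have : ε ^ 2 / (β ^ 2 + ε ^ 2) ≤ 1 := by
      rw [div_le_one hden]; nlinarith
    nlinarith
  have hnn : ∀ β : ℝ, 0 ≤ Real.exp (c * (ε ^ 2 / (β ^ 2 + ε ^ 2))) - 1 := by
    intro β
    have := Real.one_le_exp (harg β)
    linarith
  refine ⟨hnn, ?_⟩
  have hcont : Continuous (fun β : ℝ =>
      Real.exp (c * (ε ^ 2 / (β ^ 2 + ε ^ 2))) - 1) := by
    have hden : ∀ β : ℝ, β ^ 2 + ε ^ 2 ≠ 0 := by intro β; positivity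
    exact (Real.continuous_exp.comp (continuous_const.mul
      (continuous_const.div (by continuity) hden))).sub continuous_const
  have hg : Integrable (fun β : ℝ =>
      (c * Real.exp c * ε ^ 2) * (β ^ 2 + ε ^ 2)⁻¹) :=
    (integrable_sq_add_sq_inv ε hε).const_mul _
  refine hg.mono' hcont.aestronglyMeasurable ?_
  filter_upwards with β
  rw [Real.norm_of_nonneg (hnn β)]
  have hx := exp_sub_one_le_mul_exp (c * (ε ^ 2 / (β ^ 2 + ε ^ 2)))
  have hexple : Real.exp (c * (ε ^ 2 / (β ^ 2 + ε ^ 2))) ≤ Real.exp c :=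
    Real.exp_le_exp.mpr (hargle β)
  have hden : 0 < β ^ 2 + ε ^ 2 := by positivity
  have h1 : c * (ε ^ 2 / (β ^ 2 + ε ^ 2)) * Real.exp (c * (ε ^ 2 / (β ^ 2 + ε ^ 2)))
      ≤ c * (ε ^ 2 / (β ^ 2 + ε ^ 2)) * Real.exp c :=
    mul_le_mul_of_nonneg_left hexple (harg β)
  calc Real.exp (c * (ε ^ 2 / (β ^ 2 + ε ^ 2))) - 1
      ≤ c * (ε ^ 2 / (β ^ 2 + ε ^ 2)) * Real.exp c := le_trans hx h1
    _ = c * Real.exp c * ε ^ 2 * (β ^ 2 + ε ^ 2)⁻¹ := by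
        field_simp
end

section
/- With σ > 0 and ε > 0 fixed, the normalizing integral of the proper component of the SIC prior diverges as λ → ∞: if (λ_n) is a sequence of positive reals with λ_n → +∞, then ∫_ℝ (exp{(λ_n/(2σ²))·ε²/(β² + ε²)} − 1) dβ → +∞ as n → ∞; equivalently, the normalizing constant c(λ_n, ε) converges to 0. -/
open Filter MeasureTheory

/-
On `[-ε, ε]` the profile `ε² / (β² + ε²)` is at least `1/2`, so the integral is at least
`2ε (exp (a/2) - 1)` with `a = λ / (2σ²)`, which tends to infinity with `λ`. The integral is
finite because convexity of `exp` gives `exp (a x) - 1 ≤ x (exp a - 1)` for `x ∈ [0, 1]` and the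
profile is a rescaled Cauchy density.
-/

lemma Real.exp_mul_sub_one_le (a : ℝ) {x : ℝ} (hx₀ : 0 ≤ x) (hx₁ : x ≤ 1) :
    Real.exp (a * x) - 1 ≤ x * (Real.exp a - 1) := by
  have h := convexOn_exp.2 (Set.mem_univ 0) (Set.mem_univ a) (sub_nonneg.2 hx₁) hx₀
    (sub_add_cancel 1 x)
  simp only [smul_eq_mul, mul_zero, zero_add, Real.exp_zero, mul_one] at h
  rw [mul_comm x a] at h
  linarith

lemma MeasureTheory.Integrable.exp_const_mul_sub_one {α : Type*} [MeasurableSpace α]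
    {μ : Measure α} {g : α → ℝ} (hg : Integrable g μ) (hg₀ : ∀ x, 0 ≤ g x)
    (hg₁ : ∀ x, g x ≤ 1) {a : ℝ} (ha : 0 ≤ a) :
    Integrable (fun x => Real.exp (a * g x) - 1) μ := by
  refine (hg.mul_const (Real.exp a - 1)).mono' ?_ (ae_of_all _ fun x => ?_)
  · exact ((Real.continuous_exp.comp_aestronglyMeasurable
      (hg.aestronglyMeasurable.const_mul a)).sub aestronglyMeasurable_const)
  · have h₁ : 1 ≤ Real.exp (a * g x) := Real.one_le_exp (mul_nonneg ha (hg₀ x))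
    rw [Real.norm_of_nonneg (sub_nonneg.2 h₁)]
    exact Real.exp_mul_sub_one_le a (hg₀ x) (hg₁ x)

section Profile

variable {ε : ℝ}

lemma integrable_sq_div_sq_add_sq (hε : ε ≠ 0) :
    Integrable fun β : ℝ => ε ^ 2 / (β ^ 2 + ε ^ 2) := by
  refine (integrable_inv_one_add_sq.comp_div hε).congr (ae_of_all _ fun β => ?_)
  field_simp
  ring

lemma sq_div_sq_add_sq_le_one (β : ℝ) : ε ^ 2 / (β ^ 2 + ε ^ 2) ≤ 1 :=
  div_le_one_of_le₀ (le_add_of_nonneg_left (sq_nonneg β)) (by positivity)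

lemma one_half_le_sq_div_sq_add_sq (hε : 0 < ε) {β : ℝ} (hβ : β ∈ Set.Icc (-ε) ε) :
    1 / 2 ≤ ε ^ 2 / (β ^ 2 + ε ^ 2) := by
  have hβε : β ^ 2 ≤ ε ^ 2 := sq_le_sq' hβ.1 hβ.2
  rw [div_le_div_iff₀ two_pos (by positivity)]
  linarith

lemma mul_exp_half_sub_one_le_integral (hε : 0 < ε) {a : ℝ} (ha : 0 ≤ a) :
    2 * ε * (Real.exp (a / 2) - 1) ≤
      ∫ β : ℝ, (Real.exp (a * (ε ^ 2 / (β ^ 2 + ε ^ 2))) - 1) := by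
  have hint := (integrable_sq_div_sq_add_sq hε.ne').exp_const_mul_sub_one
    (fun β => by positivity) sq_div_sq_add_sq_le_one ha
  have hnonneg : ∀ β : ℝ, 0 ≤ Real.exp (a * (ε ^ 2 / (β ^ 2 + ε ^ 2))) - 1 := fun β =>
    sub_nonneg.2 (Real.one_le_exp (by positivity))
  have hIcc : volume.real (Set.Icc (-ε) ε) = 2 * ε := by
    rw [Real.volume_real_Icc, max_eq_left (by linarith)]
    ring
  calc 2 * ε * (Real.exp (a / 2) - 1)
      = (Real.exp (a / 2) - 1) * volume.real (Set.Icc (-ε) ε) := by rw [hIcc, mul_comm]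
    _ ≤ ∫ β in Set.Icc (-ε) ε, (Real.exp (a * (ε ^ 2 / (β ^ 2 + ε ^ 2))) - 1) := by
        refine setIntegral_ge_of_const_le_real measurableSet_Icc
          (by simp [Real.volume_Icc]) (fun β hβ => ?_) hint.integrableOn
        have h := mul_le_mul_of_nonneg_left (one_half_le_sq_div_sq_add_sq hε hβ) ha
        rw [← div_eq_mul_one_div] at h
        linarith [Real.exp_le_exp.2 h]
    _ ≤ ∫ β : ℝ, (Real.exp (a * (ε ^ 2 / (β ^ 2 + ε ^ 2))) - 1) :=
        setIntegral_le_integral hint (ae_of_all _ hnonneg)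

lemma tendsto_integral_exp_mul_sq_div_sq_add_sq_sub_one_atTop (hε : 0 < ε) {ι : Type*}
    {l : Filter ι} {a : ι → ℝ} (ha : Tendsto a l atTop) :
    Tendsto (fun i => ∫ β : ℝ, (Real.exp (a i * (ε ^ 2 / (β ^ 2 + ε ^ 2))) - 1)) l atTop := by
  have hlower : Tendsto (fun i => 2 * ε * (Real.exp (a i / 2) - 1)) l atTop :=
    (tendsto_atTop_add_const_right _ (-1)
      (Real.tendsto_exp_atTop.comp (ha.atTop_div_const two_pos))).const_mul_atTop (by positivity)
  exact tendsto_atTop_mono' l ((ha.eventually_ge_atTop 0).mono fun i hi =>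
    mul_exp_half_sub_one_le_integral hε hi) hlower

end Profile

theorem sic_normalizing_integral_tendsto_atTop_general (σ ε : ℝ) (hσ : 0 < σ) (hε : 0 < ε)
    (lam : ℕ → ℝ)
    (hlam : Tendsto lam atTop atTop) :
    Tendsto (fun n =>
        ∫ β : ℝ, (Real.exp (lam n / (2 * σ ^ 2) * (ε ^ 2 / (β ^ 2 + ε ^ 2))) - 1))
      atTop atTop :=
  tendsto_integral_exp_mul_sq_div_sq_add_sq_sub_one_atTop hε
    (hlam.atTop_div_const (by positivity))

/-- With `σ, ε > 0` fixed, the normalizing integral of the proper component of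
the SIC prior diverges as `λ_n → ∞`:
`∫ (exp((λ_n/(2σ²)) ε²/(β² + ε²)) − 1) dβ → +∞`. -/
theorem sic_normalizing_integral_tendsto_atTop (σ ε : ℝ) (hσ : 0 < σ) (hε : 0 < ε)
    (lam : ℕ → ℝ) (hlam_pos : ∀ n, 0 < lam n)
    (hlam : Tendsto lam atTop atTop) :
    Tendsto (fun n =>
        ∫ β : ℝ, (Real.exp (lam n / (2 * σ ^ 2) * (ε ^ 2 / (β ^ 2 + ε ^ 2))) - 1))
      atTop atTop :=
  sic_normalizing_integral_tendsto_atTop_general σ ε hσ hε lam hlam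
end

section
/- (Limit of the normalizing integral at the phase transition.) Fix K > 0. Let (l_n) be a sequence of positive reals with l_n → +∞ and set ε_n = K·√(l_n)·exp(−l_n). Then ∫_ℝ (exp{l_n·ε_n²/(β² + ε_n²)} − 1) dβ → √π·K as n → ∞; equivalently, the normalizing constant c at these parameters converges to 1/(√π·K). -/
open Filter MeasureTheory

set_option maxHeartbeats 1000000 in
/-- **Limit of the normalizing integral at the phase transition.** With
`l_n → ∞` and `ε_n = K √(l_n) exp(−l_n)`,
`∫ (exp(l_n ε_n²/(β² + ε_n²)) − 1) dβ → √π K`. -/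
theorem sic_normalizing_integral_phase_transition (K : ℝ) (hK : 0 < K)
    (l : ℕ → ℝ) (hl_pos : ∀ n, 0 < l n) (hl : Tendsto l atTop atTop)
    (ε : ℕ → ℝ) (hε : ε = fun n => K * Real.sqrt (l n) * Real.exp (-l n)) :
    Tendsto (fun n =>
        ∫ β : ℝ, (Real.exp (l n * ((ε n) ^ 2 / (β ^ 2 + (ε n) ^ 2))) - 1))
      atTop (nhds (Real.sqrt Real.pi * K)) := by
  have hεn : ∀ n, ε n = K * Real.sqrt (l n) * Real.exp (-l n) := by
    intro n; rw [hε]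
  set F : ℕ → ℝ → ℝ := fun n u =>
    Real.exp (-(l n * u ^ 2 / (l n + u ^ 2))) - Real.exp (-l n) with hF
  -- Step 1: change of variables β = K exp(-l n) * u in each integral
  have key : ∀ n, (∫ β : ℝ,
      (Real.exp (l n * ((ε n) ^ 2 / (β ^ 2 + (ε n) ^ 2))) - 1))
      = K * ∫ u : ℝ, F n u := by
    intro n
    have hL : 0 < l n := hl_pos n
    set L := l n with hLdef
    set c : ℝ := K * Real.exp (-L) with hc
    have hc0 : 0 < c := by positivity
    set G : ℝ → ℝ := fun β =>
      Real.exp (L * ((ε n) ^ 2 / (β ^ 2 + (ε n) ^ 2))) - 1 with hG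
    have h1 : (∫ β : ℝ, G β) = |c| • ∫ u : ℝ, G (c * u) := by
      rw [MeasureTheory.Measure.integral_comp_mul_left G c, smul_smul, abs_inv,
        mul_inv_cancel₀ (abs_ne_zero.mpr hc0.ne'), one_smul]
    have hε2 : (ε n) ^ 2 = K ^ 2 * L * Real.exp (-L) ^ 2 := by
      rw [hεn n, ← hLdef]
      have : Real.sqrt L ^ 2 = L := Real.sq_sqrt hL.le
      nlinarith [this]
    have h2 : ∀ u : ℝ, c * G (c * u) = K * F n u := by
      intro u
      have hd : (0:ℝ) < L + u ^ 2 := by positivity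
      have hexp : Real.exp (-L) ≠ 0 := (Real.exp_pos _).ne'
      have harg : L * ((ε n) ^ 2 / ((c * u) ^ 2 + (ε n) ^ 2))
          = L * L / (L + u ^ 2) := by
        rw [hε2, hc]
        rw [show (K * Real.exp (-L) * u) ^ 2 + K ^ 2 * L * Real.exp (-L) ^ 2
            = (K ^ 2 * Real.exp (-L) ^ 2) * (L + u ^ 2) by ring]
        rw [show K ^ 2 * L * Real.exp (-L) ^ 2
            = (K ^ 2 * Real.exp (-L) ^ 2) * L by ring]
        rw [mul_div_mul_left _ _ (by positivity)]
        ring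
      have hsum : -L + L * L / (L + u ^ 2) = -(L * u ^ 2 / (L + u ^ 2)) := by
        field_simp
        ring
      simp only [hG, hF, harg]
      rw [hc]
      have : K * Real.exp (-L) * Real.exp (L * L / (L + u ^ 2))
          = K * Real.exp (-(L * u ^ 2 / (L + u ^ 2))) := by
        rw [mul_assoc, ← Real.exp_add, hsum]
      calc K * Real.exp (-L) * (Real.exp (L * L / (L + u ^ 2)) - 1)
          = K * Real.exp (-L) * Real.exp (L * L / (L + u ^ 2))
            - K * Real.exp (-L) := by ring
        _ = K * (Real.exp (-(L * u ^ 2 / (L + u ^ 2))) - Real.exp (-L)) := by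
            rw [this]; ring
    calc (∫ β : ℝ, G β) = |c| • ∫ u : ℝ, G (c * u) := h1
      _ = ∫ u : ℝ, c * G (c * u) := by
          rw [abs_of_pos hc0, smul_eq_mul, ← MeasureTheory.integral_const_mul]
      _ = ∫ u : ℝ, K * F n u := by simp_rw [h2]
      _ = K * ∫ u : ℝ, F n u := MeasureTheory.integral_const_mul K _
  -- Step 2: dominated convergence for ∫ F n
  have hgauss : (∫ u : ℝ, Real.exp (-u ^ 2)) = Real.sqrt Real.pi := by
    have := integral_gaussian 1
    simpa using this
  have hmain : Tendsto (fun n => ∫ u : ℝ, F n u) atTop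
      (nhds (∫ u : ℝ, Real.exp (-u ^ 2))) := by
    apply MeasureTheory.tendsto_integral_of_dominated_convergence
      (fun u : ℝ => Real.exp (-(1/2) * u ^ 2) + 32 * (1 + u ^ 2)⁻¹)
    · -- measurability
      intro n
      have hL : 0 < l n := hl_pos n
      apply Continuous.aestronglyMeasurable
      apply Continuous.sub
      · exact Real.continuous_exp.comp (Continuous.neg
          (Continuous.div (by continuity) (by continuity)
            (fun u => by positivity)))
      · exact continuous_const
    · -- bound integrable
      exact (integrable_exp_neg_mul_sq (by norm_num)).add
        ((integrable_inv_one_add_sq).const_mul 32)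
    · -- bound
      intro n
      refine Filter.Eventually.of_forall (fun u => ?_)
      have hL : 0 < l n := hl_pos n
      set L := l n with hLdef
      have hd : (0:ℝ) < L + u ^ 2 := by positivity
      set A : ℝ := L * u ^ 2 / (L + u ^ 2) with hA
      have hA0 : 0 ≤ A := by positivity
      have hAL : A ≤ L := by
        rw [hA, div_le_iff₀ hd]; nlinarith
      have hFpos : 0 ≤ F n u := by
        simp only [hF]
        have : Real.exp (-L) ≤ Real.exp (-A) :=
          Real.exp_le_exp.mpr (by linarith)
        linarith
      have hnorm : ‖F n u‖ = F n u := by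
        rw [Real.norm_eq_abs, abs_of_nonneg hFpos]
      rw [hnorm]
      have hinv_pos : (0:ℝ) < (1 + u ^ 2)⁻¹ := by positivity
      by_cases hcase : u ^ 2 ≤ L
      · -- center region : F ≤ exp(-u²/2)
        have hA_ge : u ^ 2 / 2 ≤ A := by
          rw [hA, le_div_iff₀ hd]; nlinarith
        have : F n u ≤ Real.exp (-(1/2) * u ^ 2) := by
          simp only [hF]
          have h1 : Real.exp (-A) ≤ Real.exp (-(1/2) * u ^ 2) :=
            Real.exp_le_exp.mpr (by linarith)
          have h2 : 0 < Real.exp (-L) := Real.exp_pos _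
          linarith
        linarith
      · -- tail region : u² > L
        push_neg at hcase
        set x : ℝ := L * L / (L + u ^ 2) with hx
        have hx0 : 0 ≤ x := by positivity
        have hxA : x = L - A := by rw [hx, hA]; field_simp; ring
        have hAhalf : L / 2 ≤ A := by
          rw [hA, le_div_iff₀ hd]; nlinarith
        -- F n u = exp(-L) * (exp x - 1)
        have hFeq : F n u = Real.exp (-L) * (Real.exp x - 1) := by
          simp only [hF]
          rw [mul_sub, ← Real.exp_add, mul_one]
          congr 2
          rw [hxA, hA]; ring
        -- exp x - 1 ≤ x * exp x
        have hexp1 : Real.exp x - 1 ≤ x * Real.exp x := by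
          have h1 : Real.exp (-x) * Real.exp x = 1 := by
            rw [← Real.exp_add]; simp
          nlinarith [Real.add_one_le_exp (-x), Real.exp_pos x]
        have hFle : F n u ≤ x * Real.exp (-A) := by
          rw [hFeq]
          have : Real.exp (-L) * (Real.exp x - 1)
              ≤ Real.exp (-L) * (x * Real.exp x) := by
            exact mul_le_mul_of_nonneg_left hexp1 (Real.exp_pos _).le
          calc Real.exp (-L) * (Real.exp x - 1)
              ≤ Real.exp (-L) * (x * Real.exp x) := this
            _ = x * Real.exp (-L + x) := by rw [Real.exp_add]; ring
            _ = x * Real.exp (-A) := by rw [hxA]; ring_nf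
        have hexpA : Real.exp (-A) ≤ Real.exp (-(L/2)) :=
          Real.exp_le_exp.mpr (by linarith)
        -- L² * exp(-L/2) ≤ 16
        have hL16 : L * L * Real.exp (-(L/2)) ≤ 16 := by
          have h4 : L / 4 + 1 ≤ Real.exp (L / 4) := Real.add_one_le_exp _
          have hsq : Real.exp (L / 4) * Real.exp (L / 4) = Real.exp (L / 2) := by
            rw [← Real.exp_add]; ring_nf
          have hpos : 0 < Real.exp (L / 2) := Real.exp_pos _
          have hLL : L * L ≤ 16 * Real.exp (L / 2) := by
            nlinarith [Real.exp_pos (L / 4)]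
          have hinv : Real.exp (-(L/2)) = (Real.exp (L/2))⁻¹ := by
            rw [← Real.exp_neg]
          rw [hinv]
          rw [mul_inv_le_iff₀ hpos]
          linarith
        have hgoal : F n u ≤ 32 * (1 + u ^ 2)⁻¹ := by
          by_cases hu : u ^ 2 ≤ 1
          · -- |u| ≤ 1 : F ≤ 1 ≤ 32/(1+u²)
            have hF1 : F n u ≤ 1 := by
              simp only [hF]
              have h1 : Real.exp (-A) ≤ 1 := Real.exp_le_one_iff.mpr (by linarith)
              have h2 : 0 < Real.exp (-L) := Real.exp_pos _
              linarith
            have : (16:ℝ) ≤ 32 * (1 + u ^ 2)⁻¹ := by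
              rw [le_mul_inv_iff₀ (by positivity)]; nlinarith
            exact le_trans hF1 (by linarith)
          · -- |u| > 1 : F ≤ 16/u² ≤ 32/(1+u²)
            push_neg at hu
            have hu0 : (0:ℝ) < u ^ 2 := by linarith
            have hxle : x ≤ L * L / u ^ 2 := by
              rw [hx]
              apply div_le_div_of_nonneg_left (by positivity) hu0
              linarith
            have hstep : F n u ≤ (L * L / u ^ 2) * Real.exp (-(L/2)) := by
              calc F n u ≤ x * Real.exp (-A) := hFle
                _ ≤ (L * L / u ^ 2) * Real.exp (-(L/2)) := by
                    apply mul_le_mul hxle hexpA (Real.exp_pos _).le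
                    positivity
            have h16 : (L * L / u ^ 2) * Real.exp (-(L/2)) ≤ 16 / u ^ 2 := by
              rw [div_mul_eq_mul_div, div_le_div_iff₀ hu0 hu0]
              nlinarith [hL16]
            have hfin : 16 / u ^ 2 ≤ 32 * (1 + u ^ 2)⁻¹ := by
              rw [div_le_iff₀ hu0, mul_comm (32:ℝ) _, mul_assoc,
                inv_mul_eq_div, le_div_iff₀ (by positivity : (0:ℝ) < 1 + u ^ 2)]
              nlinarith
            linarith
        have hE : 0 < Real.exp (-(1/2) * u ^ 2) := Real.exp_pos _
        linarith
    · -- pointwise convergence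
      refine Filter.Eventually.of_forall (fun u => ?_)
      have h1 : Tendsto (fun n => l n + u ^ 2) atTop atTop :=
        tendsto_atTop_add_const_right _ _ hl
      have h2 : Tendsto (fun n => (l n + u ^ 2)⁻¹) atTop (nhds 0) :=
        h1.inv_tendsto_atTop
      have h3 : Tendsto (fun n => u ^ 4 * (l n + u ^ 2)⁻¹) atTop (nhds 0) := by
        simpa using h2.const_mul (u ^ 4)
      have heq : ∀ n, l n * u ^ 2 / (l n + u ^ 2)
          = u ^ 2 - u ^ 4 * (l n + u ^ 2)⁻¹ := by
        intro n
        have hd : (0:ℝ) < l n + u ^ 2 := by have := hl_pos n; positivity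
        field_simp
        ring
      have h4 : Tendsto (fun n => l n * u ^ 2 / (l n + u ^ 2)) atTop
          (nhds (u ^ 2)) := by
        simp_rw [heq]
        simpa using (tendsto_const_nhds (x := u ^ 2) (f := atTop)).sub h3
      have h5 : Tendsto (fun n => Real.exp (-(l n * u ^ 2 / (l n + u ^ 2))))
          atTop (nhds (Real.exp (-u ^ 2))) :=
        (Real.continuous_exp.tendsto _).comp h4.neg
      have h6 : Tendsto (fun n => Real.exp (-l n)) atTop (nhds 0) :=
        Real.tendsto_exp_neg_atTop_nhds_zero.comp hl
      have := h5.sub h6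
      simpa using this
  rw [hgauss] at hmain
  have hfinal : Tendsto (fun n => K * ∫ u : ℝ, F n u) atTop
      (nhds (K * Real.sqrt Real.pi)) := hmain.const_mul K
  rw [show Real.sqrt Real.pi * K = K * Real.sqrt Real.pi from mul_comm _ _]
  exact Tendsto.congr (fun n => (key n).symm) hfinal
end

section
/- (Properness of the SIC posterior.) Let X be an n×d real matrix of full column rank, y ∈ ℝⁿ, β₀ ∈ ℝ, σ > 0, λ > 0 and ε > 0. Then the unnormalized posterior density β ↦ exp{−(‖y − β₀·1_n − Xβ‖₂² + λ·Σ_{j=1}^d β_j²/(β_j² + ε²))/(2σ²)} is Lebesgue-integrable over ℝ^d, i.e., the posterior distribution associated with the SIC prior is a proper probability distribution after normalization. -/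
open MeasureTheory

set_option maxHeartbeats 1000000 in
/-- **Properness of the SIC posterior.** If `X` has full column rank, then the
unnormalized posterior density
`β ↦ exp(−(‖y − β₀1_n − Xβ‖₂² + λ ∑ⱼ βⱼ²/(βⱼ² + ε²))/(2σ²))`
is Lebesgue-integrable over `ℝ^d`. -/
theorem sic_posterior_proper (n d : ℕ) (X : Matrix (Fin n) (Fin d) ℝ)
    (hrank : X.rank = d) (y : Fin n → ℝ) (β0 : ℝ) (σ lam ε : ℝ)
    (hσ : 0 < σ) (hlam : 0 < lam) (hε : 0 < ε) :
    Integrable (fun β : Fin d → ℝ =>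
      Real.exp (-((∑ i, (y i - β0 - X.mulVec β i) ^ 2
          + lam * ∑ j, (β j) ^ 2 / ((β j) ^ 2 + ε ^ 2)) / (2 * σ ^ 2)))) := by
  -- `mulVecLin` is injective since the rank is full
  have hker : LinearMap.ker X.mulVecLin = ⊥ := by
    have h := LinearMap.finrank_range_add_finrank_ker X.mulVecLin
    rw [Module.finrank_fin_fun] at h
    have hr : Module.finrank ℝ (LinearMap.range X.mulVecLin) = d := hrank
    have : Module.finrank ℝ (LinearMap.ker X.mulVecLin) = 0 := by omega
    exact Submodule.finrank_eq_zero.mp this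
  obtain ⟨K, hK0, hK⟩ := X.mulVecLin.exists_antilipschitzWith hker
  set k : ℝ := (K : ℝ) with hk_def
  have hk : 0 < k := hK0
  set v : Fin n → ℝ := fun i => y i - β0 with hv
  set a : ℝ := ‖v‖ with ha_def
  have ha0 : 0 ≤ a := norm_nonneg _
  set D : ℝ := (d : ℝ) + 1 with hD_def
  have hD : 0 < D := by positivity
  set c : ℝ := 1 / (4 * k ^ 2 * D * σ ^ 2) with hc_def
  have hc : 0 < c := by positivity
  -- dominating integrable function
  have hg : Integrable (fun β : Fin d → ℝ =>
      Real.exp (a ^ 2 / (2 * σ ^ 2)) * ∏ j, Real.exp (-c * (β j) ^ 2)) := by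
    refine Integrable.const_mul ?_ _
    exact Integrable.fintype_prod (f := fun (_ : Fin d) (t : ℝ) => Real.exp (-c * t ^ 2))
      (fun _ => integrable_exp_neg_mul_sq hc)
  refine hg.mono' ?_ (Filter.Eventually.of_forall fun β => ?_)
  · -- measurability via continuity
    apply Continuous.aestronglyMeasurable
    apply Real.continuous_exp.comp
    apply Continuous.neg
    apply Continuous.div_const
    apply Continuous.add
    · apply continuous_finset_sum
      intro i _
      have hmv : Continuous fun β : Fin d → ℝ => X.mulVec β i :=
        (continuous_apply i).comp X.mulVecLin.continuous_of_finiteDimensional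
      exact (continuous_const.sub hmv).pow 2
    · apply Continuous.mul continuous_const
      apply continuous_finset_sum
      intro j _
      exact (((continuous_apply j).pow 2).div
        (((continuous_apply j).pow 2).add continuous_const)
        (fun β => by positivity))
  · -- pointwise bound
    set Q : ℝ := ∑ i, (y i - β0 - X.mulVec β i) ^ 2 with hQ_def
    set S : ℝ := ∑ j, (β j) ^ 2 / ((β j) ^ 2 + ε ^ 2) with hS_def
    have hS0 : 0 ≤ S := Finset.sum_nonneg fun j _ => by positivity
    have hQ0 : 0 ≤ Q := Finset.sum_nonneg fun i _ => sq_nonneg _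
    set s : ℝ := ‖v - X.mulVec β‖ with hs_def
    have hs0 : 0 ≤ s := norm_nonneg _
    set t : ℝ := ‖β‖ with ht_def
    have ht0 : 0 ≤ t := norm_nonneg _
    -- Q ≥ s²
    have hQs : s ^ 2 ≤ Q := by
      have h1 : s ≤ Real.sqrt Q := by
        rw [hs_def]
        refine (pi_norm_le_iff_of_nonneg (Real.sqrt_nonneg _)).mpr fun i => ?_
        have h2 : ((v - X.mulVec β) i) ^ 2 ≤ Q := by
          have : ((v - X.mulVec β) i) ^ 2 = (y i - β0 - X.mulVec β i) ^ 2 := by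
            simp [hv]
          rw [this, hQ_def]
          exact Finset.single_le_sum (f := fun i => (y i - β0 - X.mulVec β i) ^ 2)
            (fun i _ => sq_nonneg _) (Finset.mem_univ i)
        calc ‖(v - X.mulVec β) i‖ = Real.sqrt (((v - X.mulVec β) i) ^ 2) := by
              rw [Real.sqrt_sq_eq_abs]; rfl
          _ ≤ Real.sqrt Q := Real.sqrt_le_sqrt h2
      calc s ^ 2 ≤ (Real.sqrt Q) ^ 2 := by
            exact pow_le_pow_left₀ hs0 h1 2
        _ = Q := Real.sq_sqrt hQ0
    -- t ≤ k (a + s)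
    have h1 : t ≤ k * ‖X.mulVec β‖ := by
      have := hK.le_mul_dist β 0
      simpa [dist_zero_right, Matrix.mulVecLin_apply] using this
    have h2 : ‖X.mulVec β‖ ≤ a + s := by
      have : X.mulVec β = v - (v - X.mulVec β) := by abel
      rw [this]
      exact norm_sub_le _ _
    have hts : t ≤ k * (a + s) := h1.trans (by nlinarith)
    have ht2 : t ^ 2 ≤ 2 * k ^ 2 * s ^ 2 + 2 * k ^ 2 * a ^ 2 := by
      have := mul_self_le_mul_self ht0 hts
      nlinarith [sq_nonneg (a - s)]
    -- ∑ βⱼ² ≤ D t²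
    have h3 : ∑ j, (β j) ^ 2 ≤ D * t ^ 2 := by
      have h4 : ∑ j, (β j) ^ 2 ≤ ∑ _j : Fin d, t ^ 2 := by
        refine Finset.sum_le_sum fun j _ => ?_
        have hbj : |β j| ≤ t := by
          simpa using norm_le_pi_norm β j
        calc (β j) ^ 2 = |β j| ^ 2 := (sq_abs _).symm
          _ ≤ t ^ 2 := pow_le_pow_left₀ (abs_nonneg _) hbj 2
      have h5 : ∑ _j : Fin d, t ^ 2 = (d : ℝ) * t ^ 2 := by
        simp [Finset.sum_const, mul_comm]
      rw [h5] at h4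
      nlinarith
    -- main exponent bound
    have hmain : (∑ j, (β j) ^ 2) / (2 * k ^ 2 * D) - a ^ 2 ≤ Q + lam * S := by
      have hlS : 0 ≤ lam * S := mul_nonneg hlam.le hS0
      have : (∑ j, (β j) ^ 2) / (2 * k ^ 2 * D) ≤ t ^ 2 / (2 * k ^ 2) := by
        rw [div_le_div_iff₀ (by positivity) (by positivity)]
        nlinarith
      have h6 : t ^ 2 / (2 * k ^ 2) ≤ s ^ 2 + a ^ 2 := by
        rw [div_le_iff₀ (by positivity)]
        nlinarith
      linarith
    have hexp : -((Q + lam * S) / (2 * σ ^ 2)) ≤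
        a ^ 2 / (2 * σ ^ 2) + ∑ j, -c * (β j) ^ 2 := by
      have hsum : ∑ j, -c * (β j) ^ 2 = -c * ∑ j, (β j) ^ 2 := by
        rw [Finset.mul_sum]
      rw [hsum]
      have heq : a ^ 2 / (2 * σ ^ 2) + -c * ∑ j, (β j) ^ 2 =
          -(((∑ j, (β j) ^ 2) / (2 * k ^ 2 * D) - a ^ 2) / (2 * σ ^ 2)) := by
        rw [hc_def]
        field_simp
        ring
      rw [heq]
      apply neg_le_neg
      gcongr
    calc ‖Real.exp (-((Q + lam * S) / (2 * σ ^ 2)))‖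
        = Real.exp (-((Q + lam * S) / (2 * σ ^ 2))) := by
          rw [Real.norm_eq_abs, Real.abs_exp]
      _ ≤ Real.exp (a ^ 2 / (2 * σ ^ 2) + ∑ j, -c * (β j) ^ 2) :=
          Real.exp_le_exp.mpr hexp
      _ = Real.exp (a ^ 2 / (2 * σ ^ 2)) * ∏ j, Real.exp (-c * (β j) ^ 2) := by
          rw [Real.exp_add, Real.exp_sum]
end
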